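/- arXiv:1901.10222 — 2 statements merged into one kernel-verified Lean document; each statement's English description precedes it below -/
import Mathlib

section
/- Let F ⊆ E be a finite Galois extension and 𝔤 a finite-dimensional Lie algebra over E. Then there is an isomorphism of E-Lie algebras 𝔤_F ⊗_F E ≅ ⨁_{σ ∈ Gal(E,F)} 𝔤^σ, where 𝔤_F is the underlying F-Lie algebra and 𝔤^σ is the σ-conjugate of 𝔤. -/
/-!
Let `φ_σ : 𝔤 → 𝔤^σ` be the given semilinear isomorphisms. The `E`-linear map
`E ⊗_F 𝔤 → ∏_σ 𝔤^σ`, `a ⊗ x ↦ (a • φ_σ x)_σ`, preserves brackets because every `φ_σ` does.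
By Dedekind's independence of characters the vectors `(σ b)_σ`, `b ∈ E`, span `E^Gal(E/F)`, so
the image contains `(u_σ • φ_σ x)_σ` for all `u ∈ E^Gal(E/F)`, in particular every vector
supported on a single factor: the map is onto. Both sides have `E`-dimension
`[E : F] · dim 𝔤 = |Gal(E/F)| · dim 𝔤`, so it is an isomorphism.
-/

open scoped TensorProduct DirectSum

def IsSemilinear {E V W : Type*} [Field E] [AddCommGroup V] [AddCommGroup W]
    [Module E V] [Module E W] (σ : E →+* E) (φ : V → W) : Prop :=
  ∀ (a b : E) (v w : V), φ (a • v + b • w) = σ a • φ v + σ b • φ w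

/-- The conjugate `𝔤^σ` is not constructed: any `𝔥` receiving a bijective `σ`-semilinear
bracket-preserving map from `𝔤` is one. -/
def IsConjugate {E : Type*} [Field E] (σ : E →+* E) (𝔤 𝔥 : Type*)
    [LieRing 𝔤] [LieAlgebra E 𝔤] [LieRing 𝔥] [LieAlgebra E 𝔥] : Prop :=
  ∃ φ : 𝔤 ≃ 𝔥, IsSemilinear σ φ ∧ ∀ X Y : 𝔤, φ ⁅X, Y⁆ = ⁅φ X, φ Y⁆

instance instLieRingExtendRestrictScalars {F E 𝔤 : Type*} [Field F] [Field E] [Algebra F E]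
    [LieRing 𝔤] [LieAlgebra E 𝔤] : LieRing (E ⊗[F] RestrictScalars F E 𝔤) :=
  LieAlgebra.ExtendScalars.instLieRing F E (RestrictScalars F E 𝔤)

instance instLieAlgebraExtendRestrictScalars {F E 𝔤 : Type*} [Field F] [Field E] [Algebra F E]
    [LieRing 𝔤] [LieAlgebra E 𝔤] : LieAlgebra E (E ⊗[F] RestrictScalars F E 𝔤) :=
  LieAlgebra.ExtendScalars.instLieAlgebra F E (RestrictScalars F E 𝔤)

namespace IsSemilinear

variable {E V W : Type*} [Field E] [AddCommGroup V] [AddCommGroup W] [Module E V] [Module E W]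
  {σ : E →+* E} {φ : V → W}

theorem map_add (h : IsSemilinear σ φ) (v w : V) : φ (v + w) = φ v + φ w := by
  simpa using h 1 1 v w

theorem map_smul (h : IsSemilinear σ φ) (a : E) (v : V) : φ (a • v) = σ a • φ v := by
  simpa using h a 0 v 0

def toLinearMap (h : IsSemilinear σ φ) : V →ₛₗ[σ] W where
  toFun := φ
  map_add' := h.map_add
  map_smul' := h.map_smul

end IsSemilinear

theorem LinearMap.finrank_eq_of_bijective {R S V W : Type*} [Semiring R] [Semiring S]
    [AddCommMonoid V] [AddCommMonoid W] [Module R V] [Module S W] {σ : R →+* S}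
    (hσ : Function.Bijective σ) (f : V →ₛₗ[σ] W) (hf : Function.Bijective f) :
    Module.finrank R V = Module.finrank S W := by
  have := congrArg Cardinal.toNat
    (lift_rank_eq_of_equiv_equiv σ (AddEquiv.ofBijective f hf) hσ f.map_smulₛₗ)
  rwa [Cardinal.toNat_lift, Cardinal.toNat_lift] at this

theorem AlgEquiv.span_range_eval_eq_top (F E : Type*) [CommSemiring F] [Field E] [Algebra F E]
    [Finite (E ≃ₐ[F] E)] :
    Submodule.span E (Set.range fun (b : E) (σ : E ≃ₐ[F] E) => σ b) = ⊤ :=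
  span_flip_eq_top_iff_linearIndependent.mpr <|
    (linearIndependent_monoidHom E E).comp (fun σ : E ≃ₐ[F] E => (σ : E →* E))
      fun _ _ h => AlgEquiv.ext fun b => DFunLike.congr_fun h b

section RestrictScalars

variable (F E V : Type*) [Field F] [Field E] [Algebra F E] [AddCommGroup V] [Module E V]

-- The `F`-module structure of `RestrictScalars F E V` is by definition `Module.compHom`, so facts
-- about `V` with that structure transfer definitionally.

theorem Module.finrank_restrictScalars :
    Module.finrank F (RestrictScalars F E V) = Module.finrank F E * Module.finrank E V := by
  let : Module F V := Module.compHom V (algebraMap F E)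
  have : IsScalarTower F E V := .of_compHom F E V
  exact (Module.finrank_mul_finrank F E V).symm

instance Module.Free.restrictScalars : Module.Free F (RestrictScalars F E V) := by
  let : Module F V := Module.compHom V (algebraMap F E)
  exact Module.Free.of_divisionRing F V

instance Module.Finite.restrictScalars [Module.Finite F E] [Module.Finite E V] :
    Module.Finite F (RestrictScalars F E V) := by
  let : Module F V := Module.compHom V (algebraMap F E)
  have : IsScalarTower F E V := .of_compHom F E V
  exact Module.Finite.trans E V

end RestrictScalars

theorem LinearMap.liftBaseChange_lie {R A L K : Type*} [CommRing R] [CommRing A] [Algebra R A]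
    [LieRing L] [LieAlgebra R L] [LieRing K] [LieAlgebra A K] [Module R K]
    [IsScalarTower R A K] (f : L →ₗ[R] K) (hf : ∀ x y, f ⁅x, y⁆ = ⁅f x, f y⁆)
    (s t : A ⊗[R] L) :
    f.liftBaseChange A ⁅s, t⁆ = ⁅f.liftBaseChange A s, f.liftBaseChange A t⁆ := by
  induction s using TensorProduct.induction_on with
  | zero => simp
  | add s₁ s₂ h₁ h₂ => simp [add_lie, h₁, h₂]
  | tmul a x =>
    induction t using TensorProduct.induction_on with
    | zero => simp
    | add t₁ t₂ h₁ h₂ => simp [lie_add, h₁, h₂]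
    | tmul b y => simp [hf, smul_smul, mul_comm]

def LinearEquiv.toLieEquivDirectSum {R L ι : Type*} [CommRing R] [LieRing L] [LieAlgebra R L]
    [Fintype ι] {M : ι → Type*} [∀ i, LieRing (M i)] [∀ i, LieAlgebra R (M i)]
    (e : L ≃ₗ[R] ∀ i, M i) (he : ∀ x y i, e ⁅x, y⁆ i = ⁅e x i, e y i⁆) : L ≃ₗ⁅R⁆ ⨁ i, M i :=
  { e.trans (DirectSum.linearEquivFunOnFintype R ι M).symm with
    map_lie' := fun {x y} => DFinsupp.ext fun i => he x y i }

section ConjugatesLift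

variable {F E : Type*} [CommSemiring F] [CommSemiring E] [Algebra F E]

def LinearMap.restrictScalarsOfAlgEquiv {V W : Type*} [AddCommMonoid V] [Module E V]
    [AddCommMonoid W] [Module E W] [Module F W] [IsScalarTower F E W] (σ : E ≃ₐ[F] E)
    (f : V →ₛₗ[(σ : E →+* E)] W) : RestrictScalars F E V →ₗ[F] W where
  toFun x := f (RestrictScalars.addEquiv F E V x)
  map_add' x y := by simp
  map_smul' c x := by simp [RestrictScalars.addEquiv_map_smul, f.map_smulₛₗ]

variable {V : Type*} [AddCommMonoid V] [Module E V]
  {M : (E ≃ₐ[F] E) → Type*} [∀ σ, AddCommMonoid (M σ)] [∀ σ, Module E (M σ)]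
  [∀ σ, Module F (M σ)] [∀ σ, IsScalarTower F E (M σ)]
  (φ : ∀ σ : E ≃ₐ[F] E, V →ₛₗ[(σ : E →+* E)] M σ)

def conjugatesLift : E ⊗[F] RestrictScalars F E V →ₗ[E] ∀ σ, M σ :=
  LinearMap.pi fun σ => (LinearMap.restrictScalarsOfAlgEquiv σ (φ σ)).liftBaseChange E

@[simp]
theorem conjugatesLift_tmul (a : E) (x : RestrictScalars F E V) (σ : E ≃ₐ[F] E) :
    conjugatesLift φ (a ⊗ₜ x) σ = a • φ σ (RestrictScalars.addEquiv F E V x) :=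
  rfl

end ConjugatesLift

section ConjugatesLiftField

variable {F E : Type*} [Field F] [Field E] [Algebra F E]
  {V : Type*} [AddCommGroup V] [Module E V]
  {M : (E ≃ₐ[F] E) → Type*} [∀ σ, AddCommGroup (M σ)] [∀ σ, Module E (M σ)]
  [∀ σ, Module F (M σ)] [∀ σ, IsScalarTower F E (M σ)]
  (φ : ∀ σ : E ≃ₐ[F] E, V →ₛₗ[(σ : E →+* E)] M σ)

theorem smul_apply_mem_range_conjugatesLift [Finite (E ≃ₐ[F] E)] (x : V)
    (u : (E ≃ₐ[F] E) → E) : (fun σ => u σ • φ σ x) ∈ LinearMap.range (conjugatesLift φ) := by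
  let twist : ((E ≃ₐ[F] E) → E) →ₗ[E] ∀ σ, M σ :=
    LinearMap.pi fun σ => (LinearMap.proj σ).smulRight (φ σ x)
  suffices LinearMap.range twist ≤ LinearMap.range (conjugatesLift φ) from this ⟨u, rfl⟩
  rw [LinearMap.range_eq_map, ← AlgEquiv.span_range_eval_eq_top F E, Submodule.map_span_le]
  rintro _ ⟨b, rfl⟩
  refine ⟨1 ⊗ₜ (RestrictScalars.addEquiv F E V).symm (b • x), funext fun σ => ?_⟩
  simp [twist]

theorem conjugatesLift_surjective [Finite (E ≃ₐ[F] E)]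
    (hφ : ∀ σ, Function.Surjective (φ σ)) : Function.Surjective (conjugatesLift φ) := by
  classical
  rw [← LinearMap.range_eq_top, eq_top_iff, ← LinearMap.iSup_range_single, iSup_le_iff]
  rintro τ _ ⟨y, rfl⟩
  obtain ⟨x, rfl⟩ := hφ τ y
  convert smul_apply_mem_range_conjugatesLift φ x (Pi.single τ 1) using 1
  funext σ
  by_cases h : σ = τ
  · subst h; simp
  · simp [h]

theorem conjugatesLift_bijective [FiniteDimensional F E] [IsGalois F E] [FiniteDimensional E V]
    (hφ : ∀ σ, Function.Bijective (φ σ)) : Function.Bijective (conjugatesLift φ) := by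
  have hfinrank σ : Module.finrank E V = Module.finrank E (M σ) :=
    (φ σ).finrank_eq_of_bijective σ.bijective (hφ σ)
  have (σ : E ≃ₐ[F] E) : FiniteDimensional E (M σ) := Module.Finite.of_surjective (φ σ) (hφ σ).2
  have hdim : Module.finrank E (E ⊗[F] RestrictScalars F E V) = Module.finrank E (∀ σ, M σ) := by
    rw [Module.finrank_baseChange, Module.finrank_restrictScalars, Module.finrank_pi_fintype,
      ← Finset.sum_congr rfl fun σ _ => hfinrank σ, Finset.sum_const, Finset.card_univ,
      Fintype.card_eq_nat_card, IsGalois.card_aut_eq_finrank, smul_eq_mul]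
  have hsurj := conjugatesLift_surjective φ fun σ => (hφ σ).2
  exact ⟨(LinearMap.injective_iff_surjective_of_finrank_eq_finrank hdim).mpr hsurj, hsurj⟩

end ConjugatesLiftField

theorem conjugatesLift_lie {F E : Type*} [Field F] [Field E] [Algebra F E]
    {𝔤 : Type*} [LieRing 𝔤] [LieAlgebra E 𝔤] {𝔥 : (E ≃ₐ[F] E) → Type*} [∀ σ, LieRing (𝔥 σ)]
    [∀ σ, LieAlgebra E (𝔥 σ)] [∀ σ, Module F (𝔥 σ)] [∀ σ, IsScalarTower F E (𝔥 σ)]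
    (φ : ∀ σ : E ≃ₐ[F] E, 𝔤 →ₛₗ[(σ : E →+* E)] 𝔥 σ)
    (hφ : ∀ σ x y, φ σ ⁅x, y⁆ = ⁅φ σ x, φ σ y⁆) (s t : E ⊗[F] RestrictScalars F E 𝔤)
    (σ : E ≃ₐ[F] E) :
    conjugatesLift φ ⁅s, t⁆ σ = ⁅conjugatesLift φ s σ, conjugatesLift φ t σ⁆ :=
  (LinearMap.restrictScalarsOfAlgEquiv σ (φ σ)).liftBaseChange_lie (hφ σ) s t

/-- Let `F ⊆ E` be a finite Galois extension and `𝔤` a finite-dimensional Lie algebra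
over `E`.  If for each `σ` in the Galois group `Gal(E,F) = (E ≃ₐ[F] E)` the Lie algebra
`𝔥 σ` is a `σ`-conjugate of `𝔤`, then extending scalars of the underlying `F`-Lie
algebra `𝔤_F` back to `E` yields `𝔤_F ⊗_F E ≅ ⨁_{σ ∈ Gal(E,F)} 𝔤^σ`. -/
theorem extendScalars_restrictScalars_iso_directSum_conjugates
    (F E : Type*) [Field F] [Field E] [Algebra F E]
    [FiniteDimensional F E] [IsGalois F E]
    (𝔤 : Type*) [LieRing 𝔤] [LieAlgebra E 𝔤] [FiniteDimensional E 𝔤]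
    (𝔥 : (E ≃ₐ[F] E) → Type*) [∀ σ, LieRing (𝔥 σ)] [∀ σ, LieAlgebra E (𝔥 σ)]
    (hconj : ∀ σ : E ≃ₐ[F] E, IsConjugate (σ : E →+* E) 𝔤 (𝔥 σ)) :
    Nonempty ((E ⊗[F] RestrictScalars F E 𝔤) ≃ₗ⁅E⁆ ⨁ σ, 𝔥 σ) := by
  choose φ hφ hbr using hconj
  let _ (σ : E ≃ₐ[F] E) : Module F (𝔥 σ) := Module.compHom _ (algebraMap F E)
  have _ (σ : E ≃ₐ[F] E) : IsScalarTower F E (𝔥 σ) := .of_compHom F E _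
  have hψ := conjugatesLift_bijective (fun σ => (hφ σ).toLinearMap) fun σ => (φ σ).bijective
  exact ⟨(LinearEquiv.ofBijective _ hψ).toLieEquivDirectSum (conjugatesLift_lie _ hbr)⟩
end

section
/- For λ ∈ ℂ∗, the complex Lie algebra r_{3,λ}(ℂ) with basis X₁, X₂, X₃ and brackets [X₁,X₂] = X₂, [X₁,X₃] = λX₃ is defined over a subfield F ⊆ ℂ if and only if λ² + aλ + 1 = 0 for some a ∈ F. -/
universe u

/-- A complex Lie algebra `𝔤` is defined over a subfield `F ⊆ ℂ` if it admits a basis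
all of whose structure constants lie in `F`. -/
def IsDefinedOverSubfield (F : Subfield ℂ) (𝔤 : Type u) [LieRing 𝔤] [LieAlgebra ℂ 𝔤] :
    Prop :=
  ∃ (ι : Type u) (b : Module.Basis ι ℂ 𝔤), ∀ i j k, b.repr ⁅b i, b j⁆ k ∈ F

/-!
`τ x = tr (ad x)` and the Killing form `κ` are sums of (products of) structure constants, so
for a basis `b` defined over `F` every `τ (b i)` and `κ (b i) (b i)` lies in `F`. On `r_{3,λ}`
one has `(1 + λ)² κ = (1 + λ²) τ ⊗ τ`; for `λ ≠ -1` some `b i` has `τ (b i) ≠ 0`, which puts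
`(1 + λ)² / (1 + λ²)`, hence `λ + λ⁻¹`, in `F`.

Conversely, `ad (c X₁)` acts on `span (X₂, X₃)` with eigenvalues `c, cλ`. For
`c = (1 + λ) / λ` its trace and determinant both equal `2 - a ∈ F`, so in the cyclic basis
`X₂ + X₃, [c X₁, X₂ + X₃]` (a basis when `λ ≠ 1`) it has a companion matrix over `F`.
For `λ = -1` take `c = 1`; for `λ = 1` the basis `X` itself is defined over `ℚ`.
-/

open Module LinearMap

namespace LieAlgebra

variable (R L : Type*) [CommRing R] [LieRing L] [LieAlgebra R L]

noncomputable def adTrace : L →ₗ[R] R := trace R L ∘ₗ (ad R L : L →ₗ[R] Module.End R L)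

variable {R L}

lemma adTrace_apply (x : L) : adTrace R L x = trace R L (ad R L x) := rfl

variable {ι : Type*} [Fintype ι] [DecidableEq ι] {S : Subring R} (b : Module.Basis ι R L)

lemma adTrace_mem_of_repr_lie_mem (hb : ∀ i j k, b.repr ⁅b i, b j⁆ k ∈ S) (i : ι) :
    adTrace R L (b i) ∈ S := by
  rw [adTrace_apply, trace_eq_matrix_trace R b]
  exact S.sum_mem fun k _ => by simpa [toMatrix_apply] using hb i k k

lemma killingForm_mem_of_repr_lie_mem (hb : ∀ i j k, b.repr ⁅b i, b j⁆ k ∈ S) (i j : ι) :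
    killingForm R L (b i) (b j) ∈ S := by
  rw [killingForm_apply_apply, trace_eq_matrix_trace R b, toMatrix_comp b b b]
  exact S.sum_mem fun k _ => S.sum_mem fun m _ =>
    S.mul_mem (by simpa [toMatrix_apply] using hb i m k) (by simpa [toMatrix_apply] using hb j k m)

end LieAlgebra

open LieAlgebra

/-- `X 0, X 1, X 2` are the paper's `X₁, X₂, X₃`. -/
structure IsR3Basis {R L : Type*} [CommRing R] [LieRing L] [LieAlgebra R L]
    (X : Basis (Fin 3) R L) (l : R) : Prop where
  lie_zero_one : ⁅X 0, X 1⁆ = X 1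
  lie_zero_two : ⁅X 0, X 2⁆ = l • X 2
  lie_one_two : ⁅X 1, X 2⁆ = 0

namespace IsR3Basis

variable {R L : Type*} [CommRing R] [LieRing L] [LieAlgebra R L] {X : Basis (Fin 3) R L} {l : R}

lemma lie_two_one (hX : IsR3Basis X l) : ⁅X 2, X 1⁆ = 0 := by
  rw [← lie_skew, hX.lie_one_two, neg_zero]

lemma adTrace_zero (hX : IsR3Basis X l) : adTrace R L (X 0) = 1 + l := by
  simp [adTrace_apply, trace_eq_matrix_trace R X, Matrix.trace, Fin.sum_univ_three,
    toMatrix_apply, hX.lie_zero_one, hX.lie_zero_two]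

lemma sq_one_add_mul_killingForm (hX : IsR3Basis X l) (v w : L) :
    (1 + l) ^ 2 * killingForm R L v w = (1 + l ^ 2) * (adTrace R L v * adTrace R L w) := by
  have h10 : ⁅X 1, X 0⁆ = -X 1 := by rw [← lie_skew, hX.lie_zero_one]
  have h20 : ⁅X 2, X 0⁆ = -(l • X 2) := by rw [← lie_skew, hX.lie_zero_two]
  suffices (1 + l) ^ 2 • killingForm R L =
      (1 + l ^ 2) • (mul R R).compl₁₂ (adTrace R L) (adTrace R L) by
    simpa using congr($this v w)
  refine ext_basis X X fun i j => ?_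
  fin_cases i <;> fin_cases j <;>
    simp [killingForm_apply_apply, adTrace_apply, trace_eq_matrix_trace R X, Matrix.trace,
      Fin.sum_univ_three, toMatrix_apply, hX.lie_zero_one, hX.lie_zero_two, hX.lie_one_two,
      hX.lie_two_one, h10, h20]
  ring

end IsR3Basis

lemma exists_mem_sq_add_mul_add_one_eq_zero {K : Type*} [Field K] {F : Subfield K}
    {l t k : K} (h2 : (2 : K) ≠ 0) (hl : l ≠ 0) (ht : t ≠ 0) (htF : t ∈ F) (hkF : k ∈ F)
    (h : (1 + l) ^ 2 * k = (1 + l ^ 2) * t ^ 2) :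
    ∃ a ∈ F, l ^ 2 + a * l + 1 = 0 := by
  have hsub : t ^ 2 - k ≠ 0 := by
    intro hk
    have : 2 * l * t ^ 2 = 0 := by linear_combination h + (1 + l) ^ 2 * hk
    simp_all
  refine ⟨-(2 * k / (t ^ 2 - k)), F.neg_mem (F.div_mem (F.mul_mem (ofNat_mem F 2) hkF)
    (F.sub_mem (F.pow_mem htF 2) hkF)), ?_⟩
  field_simp
  linear_combination -h

lemma exists_ne_zero_mul_one_add_mem_and_sq_mul_mem {K : Type*} [Field K] {F : Subfield K}
    {l a : K} (ha : a ∈ F) (h : l ^ 2 + a * l + 1 = 0) :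
    ∃ c ≠ 0, c * (1 + l) ∈ F ∧ c ^ 2 * l ∈ F := by
  rcases eq_or_ne l (-1) with rfl | hl1
  · exact ⟨1, one_ne_zero, by simp, by simp⟩
  have hl : l ≠ 0 := by rintro rfl; simp at h
  have hF : 2 - a ∈ F := F.sub_mem (ofNat_mem F 2) ha
  refine ⟨(1 + l) / l, div_ne_zero (fun h0 => hl1 ?_) hl, ?_, ?_⟩
  · linear_combination h0
  · convert hF using 1; field_simp; linear_combination h
  · convert hF using 1; field_simp; linear_combination h

lemma Module.Basis.linearIndependent_smul_add {K M : Type*} [Field K] [AddCommGroup M]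
    [Module K M] (X : Basis (Fin 3) K M) {c l : K} (hc : c ≠ 0) (hl : l ≠ 1) :
    LinearIndependent K ![c • X 0, X 1 + X 2, c • X 1 + (c * l) • X 2] := by
  rw [Fintype.linearIndependent_iff]
  intro g hg
  have h0 : g 0 = 0 := by simpa [Fin.sum_univ_three, hc] using congr(X.repr $hg 0)
  have h1 : g 1 + g 2 * c = 0 := by simpa [Fin.sum_univ_three] using congr(X.repr $hg 1)
  have h2 : g 1 + g 2 * (c * l) = 0 := by simpa [Fin.sum_univ_three] using congr(X.repr $hg 2)
  have hg2 : g 2 = 0 := by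
    have : g 2 * c * (l - 1) = 0 := by linear_combination h2 - h1
    simpa [hc, sub_eq_zero, hl] using this
  intro i
  match i with
  | 0 => exact h0
  | 1 => linear_combination h1 - c * hg2
  | 2 => exact hg2

variable {𝔤 : Type u} [LieRing 𝔤] [LieAlgebra ℂ 𝔤] {F : Subfield ℂ}

lemma isDefinedOverSubfield_of_repr_lie_mem {n : ℕ} (b : Basis (Fin n) ℂ 𝔤)
    (h : ∀ i j k, b.repr ⁅b i, b j⁆ k ∈ F) : IsDefinedOverSubfield F 𝔤 :=
  ⟨ULift (Fin n), b.reindex Equiv.ulift.symm, fun i j k => by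
    simpa only [Basis.reindex_apply, Basis.repr_reindex_apply, Equiv.symm_symm,
      Equiv.ulift_apply] using h i.down j.down k.down⟩

lemma isDefinedOverSubfield_of_lie_eq (b : Basis (Fin 3) ℂ 𝔤) {p q r s : ℂ}
    (hp : p ∈ F) (hq : q ∈ F) (hr : r ∈ F) (hs : s ∈ F)
    (h01 : ⁅b 0, b 1⁆ = p • b 1 + q • b 2) (h02 : ⁅b 0, b 2⁆ = r • b 1 + s • b 2)
    (h12 : ⁅b 1, b 2⁆ = 0) : IsDefinedOverSubfield F 𝔤 := by
  let V : Set 𝔤 := {v | ∀ k, b.repr v k ∈ F}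
  have zero_mem : 0 ∈ V := fun k => by simp [F.zero_mem]
  have neg_mem {v} (hv : v ∈ V) : -v ∈ V := fun k => by simpa using F.neg_mem (hv k)
  have smul_add_mem {x y} (hx : x ∈ F) (hy : y ∈ F) : x • b 1 + y • b 2 ∈ V := fun k => by
    fin_cases k <;> simp [hx, hy, F.zero_mem]
  refine isDefinedOverSubfield_of_repr_lie_mem b fun i j => ?_
  match i, j with
  | 0, 0 => exact (lie_self (b 0)).symm ▸ zero_mem
  | 0, 1 => exact h01 ▸ smul_add_mem hp hq
  | 0, 2 => exact h02 ▸ smul_add_mem hr hs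
  | 1, 0 => rw [← lie_skew, h01]; exact neg_mem (smul_add_mem hp hq)
  | 1, 1 => exact (lie_self (b 1)).symm ▸ zero_mem
  | 1, 2 => exact h12 ▸ zero_mem
  | 2, 0 => rw [← lie_skew, h02]; exact neg_mem (smul_add_mem hr hs)
  | 2, 1 => rw [← lie_skew, h12, neg_zero]; exact zero_mem
  | 2, 2 => exact (lie_self (b 2)).symm ▸ zero_mem

lemma IsR3Basis.isDefinedOverSubfield {X : Basis (Fin 3) ℂ 𝔤} {l c : ℂ} (hX : IsR3Basis X l)
    (hl : l ≠ 1) (hc : c ≠ 0) (htr : c * (1 + l) ∈ F) (hdet : c ^ 2 * l ∈ F) :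
    IsDefinedOverSubfield F 𝔤 := by
  let b := basisOfLinearIndependentOfCardEqFinrank (X.linearIndependent_smul_add hc hl)
    (finrank_eq_card_basis X).symm
  have hb : ⇑b = ![c • X 0, X 1 + X 2, c • X 1 + (c * l) • X 2] :=
    coe_basisOfLinearIndependentOfCardEqFinrank _ _
  refine isDefinedOverSubfield_of_lie_eq b F.zero_mem F.one_mem (F.neg_mem hdet) htr ?_ ?_ ?_ <;>
    simp only [hb, Matrix.cons_val]
  · rw [smul_lie, lie_add, hX.lie_zero_one, hX.lie_zero_two]; module
  · rw [smul_lie, lie_add, lie_smul, lie_smul, hX.lie_zero_one, hX.lie_zero_two]; module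
  · simp [hX.lie_one_two, hX.lie_two_one]

/-- For `λ ∈ ℂ*`, the complex Lie algebra `r_{3,λ}(ℂ)` with basis `X₁, X₂, X₃` and
brackets `[X₁,X₂] = X₂`, `[X₁,X₃] = λ X₃` (and `[X₂,X₃] = 0`) is defined over a
subfield `F ⊆ ℂ` if and only if `λ² + aλ + 1 = 0` for some `a ∈ F`. -/
theorem r3_lambda_definedOver_iff (F : Subfield ℂ) (l : ℂ) (hl : l ≠ 0)
    (𝔤 : Type u) [LieRing 𝔤] [LieAlgebra ℂ 𝔤] (X : Module.Basis (Fin 3) ℂ 𝔤)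
    (h12 : ⁅X 0, X 1⁆ = X 1) (h13 : ⁅X 0, X 2⁆ = l • X 2) (h23 : ⁅X 1, X 2⁆ = 0) :
    IsDefinedOverSubfield F 𝔤 ↔ ∃ a ∈ F, l ^ 2 + a * l + 1 = 0 := by
  have hX : IsR3Basis X l := ⟨h12, h13, h23⟩
  constructor
  · rintro ⟨ι, b, hb⟩
    rcases eq_or_ne l (-1) with rfl | hl1
    · exact ⟨2, ofNat_mem F 2, by ring⟩
    have : FiniteDimensional ℂ 𝔤 := .of_basis X
    have : Fintype ι := FiniteDimensional.fintypeBasisIndex b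
    classical
    obtain ⟨i, hi⟩ : ∃ i, adTrace ℂ 𝔤 (b i) ≠ 0 := by
      by_contra! h
      have hzero : adTrace ℂ 𝔤 = 0 := b.ext fun i => h i
      refine hl1 (eq_neg_of_add_eq_zero_right ?_)
      rw [← hX.adTrace_zero, hzero, LinearMap.zero_apply]
    exact exists_mem_sq_add_mul_add_one_eq_zero two_ne_zero hl hi
      (adTrace_mem_of_repr_lie_mem b hb i) (killingForm_mem_of_repr_lie_mem b hb i i)
      (by simpa [sq] using hX.sq_one_add_mul_killingForm (b i) (b i))
  · rintro ⟨a, ha, hq⟩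
    rcases eq_or_ne l 1 with rfl | hl1
    · exact isDefinedOverSubfield_of_lie_eq X F.one_mem F.zero_mem F.zero_mem F.one_mem
        (by simp [h12]) (by simp [h13]) h23
    obtain ⟨c, hc, htr, hdet⟩ := exists_ne_zero_mul_one_add_mem_and_sq_mul_mem ha hq
    exact hX.isDefinedOverSubfield hl1 hc htr hdet
end
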